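/- Let Λ ⊂ C be a lattice with Voronoi cell V of 0, and let U ⊆ C be a bounded set whose boundary consists of finitely many rectifiable curves. Then the number of Voronoi cells of Λ needed to cover the boundary of NU is O(|N|) as N → ∞ in C; in particular the number of lattice points of Λ in NU equals |N|²·λ(U)/λ(V) + O(|N|). -/

import Mathlib

/-!
Every point lies in the Voronoi cell of a nearest lattice point, and two distinct cells meet only
in a null set, inside a perpendicular bisector. Cells are convex, so a cell that meets `D` but not
`∂D` lies inside `D`. Hence the cells of the lattice points of `D` that avoid `∂D` are almost
disjoint subsets of `D`, while the cells of the lattice points of `D` together with the cells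
meeting `∂D` cover `D`. Comparing volumes, `#(D ∩ Λ)` differs from `λ(D) / λ(V)` by at most the
number of cells meeting `∂D`.

For `D = N U` we have `∂D = N ∂U` and `λ(D) = |N|² λ(U)`. A curve of length `ℓ` is covered by
`ℓ / ε + 1` balls of radius `ε`: cut it where the arc length crosses a multiple of `ε`. So
`∂(N U)` is covered by `O(|N|)` unit balls. Cells have bounded diameter and any ball of fixed
radius contains boundedly many lattice points, so each unit ball meets boundedly many cells.
-/

open Set Metric MeasureTheory Module Bornology
open scoped Pointwise ENNReal

section BoundedVariation

variable {α E : Type*} [LinearOrder α] [PseudoMetricSpace E] {f : α → E} {s : Set α}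

theorem BoundedVariationOn.dist_le_sub_of_le (hf : BoundedVariationOn f s) {x y : α}
    (hx : x ∈ s) (hy : y ∈ s) (hxy : x ≤ y) :
    dist (f x) (f y) ≤
      (eVariationOn f (s ∩ Iic y)).toReal - (eVariationOn f (s ∩ Iic x)).toReal := by
  have hsplit : eVariationOn f (s ∩ Iic x) + edist (f x) (f y) ≤ eVariationOn f (s ∩ Iic y) :=
    calc eVariationOn f (s ∩ Iic x) + edist (f x) (f y)
        ≤ eVariationOn f (s ∩ Iic x) + eVariationOn f (s ∩ Icc x y) := by
          gcongr
          exact eVariationOn.edist_le f ⟨hx, le_rfl, hxy⟩ ⟨hy, hxy, le_rfl⟩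
      _ ≤ eVariationOn f (s ∩ Iic x ∪ s ∩ Icc x y) :=
          eVariationOn.add_le_union f fun a ha b hb => ha.2.trans hb.2.1
      _ ≤ eVariationOn f (s ∩ Iic y) :=
          eVariationOn.mono f <| union_subset (inter_subset_inter_right _ (Iic_subset_Iic.2 hxy))
            (inter_subset_inter_right _ Icc_subset_Iic_self)
  have hfin : eVariationOn f (s ∩ Iic y) ≠ ∞ := hf.mono inter_subset_left
  rw [le_sub_iff_add_le', dist_edist, ← ENNReal.toReal_add (ne_top_of_le_ne_top hfin
    (le_self_add.trans hsplit)) (ne_top_of_le_ne_top hfin (le_add_self.trans hsplit))]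
  exact ENNReal.toReal_mono hfin hsplit

theorem BoundedVariationOn.exists_finset_image_subset_iUnion_closedBall
    (hf : BoundedVariationOn f s) {ε : ℝ} (hε : 0 < ε) :
    ∃ C : Finset E, (C.card : ℝ) ≤ (eVariationOn f s).toReal / ε + 1 ∧
      f '' s ⊆ ⋃ x ∈ C, closedBall x ε := by
  classical
  -- Points whose arc lengths `φ` fall into the same interval `[jε, (j+1)ε)` are `ε`-close.
  set φ : α → ℝ := fun t => (eVariationOn f (s ∩ Iic t)).toReal
  set k : α → ℕ := fun t => ⌊φ t / ε⌋₊
  set m : ℕ := ⌊(eVariationOn f s).toReal / ε⌋₊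
  have hk : ∀ t, k t ∈ Finset.range (m + 1) := fun t =>
    Finset.mem_range_succ_iff.2 <| Nat.floor_mono <| div_le_div_of_nonneg_right
      (ENNReal.toReal_mono hf (eVariationOn.mono f inter_subset_left)) hε.le
  have hclose : ∀ t u, k t = k u → φ u - φ t < ε := fun t u h => by
    have h1 : φ u / ε < k t + 1 := h ▸ Nat.lt_floor_add_one _
    have h2 : (k t : ℝ) ≤ φ t / ε := Nat.floor_le (div_nonneg ENNReal.toReal_nonneg hε.le)
    have h3 : φ u / ε < φ t / ε + 1 := by linarith
    rw [div_add_one hε.ne', div_lt_div_iff_of_pos_right hε] at h3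
    linarith
  rcases s.eq_empty_or_nonempty with rfl | ⟨a, -⟩
  · exact ⟨∅, by simp, by simp⟩
  have : Nonempty α := ⟨a⟩
  set rep : ℕ → α := Function.invFunOn k s
  refine ⟨(Finset.range (m + 1)).image (f ∘ rep), ?_, ?_⟩
  · have hcard : ((Finset.range (m + 1)).image (f ∘ rep)).card ≤ m + 1 :=
      Finset.card_image_le.trans (Finset.card_range _).le
    have hm : (m : ℝ) ≤ (eVariationOn f s).toReal / ε :=
      Nat.floor_le (div_nonneg ENNReal.toReal_nonneg hε.le)
    calc _ ≤ (m : ℝ) + 1 := by exact_mod_cast hcard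
      _ ≤ _ := by linarith
  · rintro _ ⟨t, ht, rfl⟩
    have hex : ∃ u ∈ s, k u = k t := ⟨t, ht, rfl⟩
    have hrep : k (rep (k t)) = k t := Function.invFunOn_eq hex
    refine mem_biUnion (Finset.mem_coe.2 (Finset.mem_image_of_mem _ (hk t))) (mem_closedBall.2 ?_)
    rcases le_total t (rep (k t)) with htu | hut
    · exact (hf.dist_le_sub_of_le ht (Function.invFunOn_mem hex) htu).trans
        (hclose _ _ hrep.symm).le
    · rw [dist_comm]
      exact (hf.dist_le_sub_of_le (Function.invFunOn_mem hex) ht hut).trans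
        (hclose _ _ hrep).le

theorem exists_finset_subset_iUnion_closedBall_of_subset_iUnion_image {ι : Type*} [Fintype ι]
    {f : ι → α → E} {s : ι → Set α} (hf : ∀ i, BoundedVariationOn (f i) (s i)) {S : Set E}
    (hS : S ⊆ ⋃ i, f i '' s i) {ε : ℝ} (hε : 0 < ε) :
    ∃ C : Finset E, (C.card : ℝ) ≤
        (∑ i, (eVariationOn (f i) (s i)).toReal) / ε + Fintype.card ι ∧
      S ⊆ ⋃ x ∈ C, closedBall x ε := by
  classical
  choose C hCcard hC using fun i => (hf i).exists_finset_image_subset_iUnion_closedBall hε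
  refine ⟨Finset.univ.biUnion C, ?_, hS.trans (iUnion_subset fun i => (hC i).trans ?_)⟩
  · calc ((Finset.univ.biUnion C).card : ℝ) ≤ ∑ i, ((C i).card : ℝ) := by
          exact_mod_cast Finset.card_biUnion_le
      _ ≤ ∑ i, ((eVariationOn (f i) (s i)).toReal / ε + 1) :=
          Finset.sum_le_sum fun i _ => hCcard i
      _ = _ := by rw [Finset.sum_add_distrib, Finset.sum_div]; simp
  · exact biUnion_subset_biUnion_left fun x hx =>
      Finset.mem_coe.2 (Finset.mem_biUnion.2 ⟨i, Finset.mem_univ i, hx⟩)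

end BoundedVariation

theorem IsPreconnected.subset_of_disjoint_frontier {X : Type*} [TopologicalSpace X] {s D : Set X}
    (hs : IsPreconnected s) (hsD : Disjoint s (frontier D)) (hne : (s ∩ D).Nonempty) :
    s ⊆ D := by
  have hcover : s ⊆ interior D ∪ (closure D)ᶜ := fun x hx => by
    by_cases hxD : x ∈ closure D
    · rw [closure_eq_interior_union_frontier] at hxD
      exact hxD.imp_right fun hxf => (hsD.notMem_of_mem_left hx hxf).elim
    · exact Or.inr hxD
  rcases hs.subset_or_subset isOpen_interior isClosed_closure.isOpen_compl
      (disjoint_compl_right.mono_left interior_subset_closure) hcover with h | h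
  · exact h.trans interior_subset
  · obtain ⟨x, hxs, hxD⟩ := hne
    exact absurd (subset_closure hxD) (h hxs)

section Voronoi

variable {E : Type*}

def voronoiCell [Dist E] (Λ : Set E) (z : E) : Set E := {x | ∀ w ∈ Λ, dist x z ≤ dist x w}

def cellsMeetingFrontier [Dist E] [TopologicalSpace E] (Λ D : Set E) : Set E :=
  {z ∈ Λ | (voronoiCell Λ z ∩ frontier D).Nonempty}

theorem cellsMeetingFrontier_subset [Dist E] [TopologicalSpace E] (Λ D : Set E) :
    cellsMeetingFrontier Λ D ⊆ Λ :=
  sep_subset _ _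

section Metric

variable [PseudoMetricSpace E] {Λ : Set E}

theorem isClosed_voronoiCell (Λ : Set E) (z : E) : IsClosed (voronoiCell Λ z) := by
  simp only [voronoiCell, ofPred_forall]
  exact isClosed_biInter fun w _ => isClosed_le (continuous_id.dist continuous_const)
    (continuous_id.dist continuous_const)

theorem mem_voronoiCell_self (z : E) : z ∈ voronoiCell Λ z := fun w _ => by
  simp [dist_nonneg]

theorem voronoiCell_subset_closedBall {R : ℝ} (hR : ∀ x, ∃ w ∈ Λ, dist x w ≤ R) (z : E) :
    voronoiCell Λ z ⊆ closedBall z R := fun x hx => by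
  obtain ⟨w, hw, hxw⟩ := hR x
  exact (hx w hw).trans hxw

theorem exists_mem_voronoiCell [ProperSpace E] (hΛ : IsClosed Λ) (hne : Λ.Nonempty) (x : E) :
    ∃ z ∈ Λ, x ∈ voronoiCell Λ z := by
  obtain ⟨z, hz, hxz⟩ := hΛ.exists_infDist_eq_dist hne x
  exact ⟨z, hz, fun w hw => hxz ▸ infDist_le_dist_of_mem hw⟩

theorem isBounded_cellsMeetingFrontier {R : ℝ} (hR : ∀ x, ∃ w ∈ Λ, dist x w ≤ R) {D : Set E}
    (hD : IsBounded D) : IsBounded (cellsMeetingFrontier Λ D) := by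
  refine (hD.closure.cthickening (δ := R)).subset fun z ⟨_, x, hxz, hxD⟩ => ?_
  exact mem_cthickening_of_dist_le z x R _ (frontier_subset_closure hxD)
    (dist_comm x z ▸ voronoiCell_subset_closedBall hR z hxz)

end Metric

section InnerProduct

variable [NormedAddCommGroup E] [InnerProductSpace ℝ E]

theorem convex_voronoiCell (Λ : Set E) (z : E) : Convex ℝ (voronoiCell Λ z) := by
  simp only [voronoiCell, ofPred_forall]
  refine convex_iInter₂ fun w _ => ?_
  have hhalf : {x : E | dist x z ≤ dist x w} =
      {x | innerₛₗ ℝ (w - z) x ≤ (‖w‖ ^ 2 - ‖z‖ ^ 2) / 2} := by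
    ext x
    rw [mem_ofPred_eq, mem_ofPred_eq, dist_eq_norm, dist_eq_norm,
      ← sq_le_sq₀ (norm_nonneg _) (norm_nonneg _), norm_sub_sq_real, norm_sub_sq_real,
      innerₛₗ_apply_apply, inner_sub_left, real_inner_comm x w, real_inner_comm x z]
    constructor <;> intro h <;> linarith
  rw [hhalf]
  exact convex_halfSpace_le (innerₛₗ ℝ (w - z)).isLinear _

theorem voronoiCell_inter_subset_perpBisector {Λ : Set E} {z z' : E} (hz : z ∈ Λ)
    (hz' : z' ∈ Λ) :
    voronoiCell Λ z ∩ voronoiCell Λ z' ⊆ AffineSubspace.perpBisector z z' :=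
  fun _ ⟨hx, hx'⟩ => AffineSubspace.mem_perpBisector_iff_dist_eq.2 ((hx z' hz').antisymm (hx' z hz))

theorem measure_voronoiCell_inter_null [FiniteDimensional ℝ E] [MeasurableSpace E] [BorelSpace E]
    (μ : Measure E) [μ.IsAddHaarMeasure] {Λ : Set E} {z z' : E} (hz : z ∈ Λ) (hz' : z' ∈ Λ)
    (hne : z ≠ z') : μ (voronoiCell Λ z ∩ voronoiCell Λ z') = 0 :=
  measure_mono_null (voronoiCell_inter_subset_perpBisector hz hz')
    (Measure.addHaar_affineSubspace μ _ (by simpa using hne))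

theorem voronoiCell_subset_of_notMem_cellsMeetingFrontier {Λ D : Set E} {z : E} (hz : z ∈ Λ)
    (hzD : z ∉ cellsMeetingFrontier Λ D) (hne : (voronoiCell Λ z ∩ D).Nonempty) :
    voronoiCell Λ z ⊆ D :=
  (convex_voronoiCell Λ z).isPreconnected.subset_of_disjoint_frontier
    (disjoint_iff_inter_eq_empty.2 (not_nonempty_iff_eq_empty.1 fun h => hzD ⟨hz, h⟩)) hne

end InnerProduct

theorem voronoiCell_eq_vadd [NormedAddCommGroup E] {S : Type*} [SetLike S E] [AddSubgroupClass S E]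
    {Λ : S} {z : E} (hz : z ∈ Λ) :
    voronoiCell (Λ : Set E) z = z +ᵥ voronoiCell (Λ : Set E) 0 := by
  ext x
  rw [mem_vadd_set_iff_neg_vadd_mem, vadd_eq_add, neg_add_eq_sub]
  simp only [voronoiCell, mem_ofPred_eq, SetLike.mem_coe, dist_eq_norm, sub_zero]
  constructor
  · intro h w hw
    simpa [sub_sub] using h (z + w) (add_mem hz hw)
  · intro h w hw
    simpa [sub_sub] using h (w - z) (sub_mem hw hz)

theorem cellsMeetingFrontier_eq_setOf_add [NormedAddCommGroup E] {S : Type*} [SetLike S E]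
    [AddSubgroupClass S E] (Λ : S) (D : Set E) :
    cellsMeetingFrontier Λ D = {z | z ∈ Λ ∧ ∃ v ∈ voronoiCell Λ 0, z + v ∈ frontier D} := by
  ext z
  refine and_congr_right fun hz => ?_
  rw [voronoiCell_eq_vadd hz]
  simp [Set.Nonempty, mem_vadd_set]

namespace ZLattice

variable [NormedAddCommGroup E] (L : Submodule ℤ E) [DiscreteTopology L]

theorem isClosed_coe : IsClosed (L : Set E) :=
  @AddSubgroup.isClosed_of_discrete _ _ _ _ _ L.toAddSubgroup (inferInstanceAs (DiscreteTopology L))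

theorem finite_inter [ProperSpace E] {K : Set E} (hK : IsBounded K) : ((L : Set E) ∩ K).Finite :=
  inter_comm K L ▸ finite_isBounded_inter_isClosed
    DiscreteTopology.isDiscrete hK (isClosed_coe L)

theorem exists_forall_dist_le [NormedSpace ℝ E] [FiniteDimensional ℝ E] [IsZLattice ℝ L] :
    ∃ R, ∀ x : E, ∃ z ∈ L, dist x z ≤ R := by
  let b := (Module.Free.chooseBasis ℤ L).ofZLatticeBasis ℝ L
  have hspan : Submodule.span ℤ (range b) = L :=
    (Module.Free.chooseBasis ℤ L).ofZLatticeBasis_span ℝ L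
  refine ⟨∑ i, ‖b i‖, fun x => ⟨ZSpan.floor b x, hspan.le (ZSpan.floor b x).2, ?_⟩⟩
  rw [dist_eq_norm, ← ZSpan.fract_apply]
  exact ZSpan.norm_fract_le b x

theorem ncard_inter_closedBall_le [ProperSpace E] (c : E) (ρ : ℝ) :
    ((L : Set E) ∩ closedBall c ρ).ncard ≤ ((L : Set E) ∩ closedBall 0 (2 * ρ)).ncard := by
  rcases ((L : Set E) ∩ closedBall c ρ).eq_empty_or_nonempty with h | ⟨z₀, hz₀L, hz₀⟩
  · simp [h]
  refine ncard_le_ncard_of_injOn (· - z₀) (fun z hz => ⟨L.sub_mem hz.1 hz₀L, ?_⟩)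
    (fun _ _ _ _ h => sub_left_injective h) (finite_inter L isBounded_closedBall)
  rw [mem_closedBall, dist_zero_right, ← dist_eq_norm]
  linarith [dist_triangle_right z z₀ c, mem_closedBall.1 hz.2, mem_closedBall.1 hz₀]

theorem ncard_cellsMeetingFrontier_le [ProperSpace E] {R : ℝ}
    (hR : ∀ x, ∃ z ∈ L, dist x z ≤ R) {D : Set E} {ε : ℝ} (C : Finset E)
    (hC : frontier D ⊆ ⋃ x ∈ C, closedBall x ε) :
    (cellsMeetingFrontier L D).ncard ≤
      C.card * ((L : Set E) ∩ closedBall 0 (2 * (ε + R))).ncard := by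
  have hsub : cellsMeetingFrontier L D ⊆ ⋃ x ∈ C, (L : Set E) ∩ closedBall x (ε + R) := by
    rintro z ⟨hzL, y, hyz, hyD⟩
    obtain ⟨x, hxC, hyx⟩ := mem_iUnion₂.1 (hC hyD)
    refine mem_biUnion hxC ⟨hzL, mem_closedBall.2 ?_⟩
    linarith [dist_triangle_left z x y, mem_closedBall.1 hyx,
      mem_closedBall.1 (voronoiCell_subset_closedBall hR z hyz)]
  calc (cellsMeetingFrontier L D).ncard
      ≤ (⋃ x ∈ C, (L : Set E) ∩ closedBall x (ε + R)).ncard :=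
        ncard_le_ncard hsub (C.finite_toSet.biUnion fun x _ => finite_inter L isBounded_closedBall)
    _ ≤ ∑ x ∈ C, ((L : Set E) ∩ closedBall x (ε + R)).ncard := C.set_ncard_biUnion_le _
    _ ≤ ∑ _x ∈ C, ((L : Set E) ∩ closedBall 0 (2 * (ε + R))).ncard :=
        Finset.sum_le_sum fun x _ => ncard_inter_closedBall_le L x _
    _ = _ := by rw [Finset.sum_const, smul_eq_mul]

end ZLattice

section Measure

variable [NormedAddCommGroup E] [MeasurableSpace E] (μ : Measure E) (L : Submodule ℤ E)

namespace ZLattice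

theorem measure_voronoiCell_eq [μ.IsAddLeftInvariant] {z : E} (hz : z ∈ L) :
    μ (voronoiCell L z) = μ (voronoiCell L 0) := by
  rw [voronoiCell_eq_vadd hz, measure_vadd]

theorem measure_voronoiCell_lt_top [NormedSpace ℝ E] [FiniteDimensional ℝ E]
    [IsFiniteMeasureOnCompacts μ] [DiscreteTopology L] [IsZLattice ℝ L] :
    μ (voronoiCell L 0) < ∞ := by
  obtain ⟨R, hR⟩ := exists_forall_dist_le L
  exact (isBounded_closedBall.subset (voronoiCell_subset_closedBall hR 0)).measure_lt_top

theorem measure_voronoiCell_pos [NormedSpace ℝ E] [FiniteDimensional ℝ E] [μ.IsAddLeftInvariant]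
    [NeZero μ] [DiscreteTopology L] [IsZLattice ℝ L] :
    0 < μ (voronoiCell L 0) := by
  refine pos_iff_ne_zero.2 fun h0 => NeZero.ne μ ?_
  rw [← Measure.measure_univ_eq_zero]
  refine measure_mono_null (fun x _ => ?_)
    ((measure_biUnion_null_iff (I := (L : Set E)) (s := voronoiCell L)
      (countable_coe_iff.1 (inferInstanceAs (Countable L)))).2
      fun z hz => (measure_voronoiCell_eq μ L hz).trans h0)
  obtain ⟨z, hz, hx⟩ := exists_mem_voronoiCell (isClosed_coe L) ⟨0, L.zero_mem⟩ x
  exact mem_iUnion₂.2 ⟨z, hz, hx⟩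

variable [InnerProductSpace ℝ E] [FiniteDimensional ℝ E]

theorem measure_le_card_mul_measure_voronoiCell [μ.IsAddLeftInvariant] [DiscreteTopology L]
    {D : Set E} {F : Finset E} (hFL : ↑F ⊆ (L : Set E))
    (hF : (D ∩ L) ∪ cellsMeetingFrontier L D ⊆ F) :
    μ D ≤ F.card * μ (voronoiCell L 0) := by
  have hcover : D ⊆ ⋃ z ∈ F, voronoiCell L z := fun x hx => by
    obtain ⟨z, hzL, hxz⟩ := exists_mem_voronoiCell (isClosed_coe L) ⟨0, L.zero_mem⟩ x
    refine mem_iUnion₂.2 ⟨z, hF ?_, hxz⟩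
    by_cases hzB : z ∈ cellsMeetingFrontier L D
    · exact Or.inr hzB
    · exact Or.inl ⟨voronoiCell_subset_of_notMem_cellsMeetingFrontier hzL hzB ⟨x, hxz, hx⟩
        (mem_voronoiCell_self z), hzL⟩
  calc μ D ≤ ∑ z ∈ F, μ (voronoiCell L z) :=
        (measure_mono hcover).trans (measure_biUnion_finset_le _ _)
    _ = F.card * μ (voronoiCell L 0) := by
      rw [Finset.sum_congr rfl fun z hz => measure_voronoiCell_eq μ L (hFL hz), Finset.sum_const,
        nsmul_eq_mul]

variable [BorelSpace E] [μ.IsAddHaarMeasure]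

theorem measure_biUnion_voronoiCell {F : Finset E} (hF : ↑F ⊆ (L : Set E)) :
    μ (⋃ z ∈ F, voronoiCell L z) = F.card * μ (voronoiCell L 0) := by
  rw [measure_biUnion_finset₀
    (fun z hz z' hz' hne => measure_voronoiCell_inter_null μ (hF hz) (hF hz') hne)
    (fun z _ => (isClosed_voronoiCell _ z).measurableSet.nullMeasurableSet),
    Finset.sum_congr rfl fun z hz => measure_voronoiCell_eq μ L (hF hz), Finset.sum_const,
    nsmul_eq_mul]

theorem card_mul_measure_voronoiCell_le {D : Set E} {F : Finset E}
    (hF : ↑F ⊆ (D ∩ L) \ cellsMeetingFrontier L D) :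
    F.card * μ (voronoiCell L 0) ≤ μ D := by
  rw [← measure_biUnion_voronoiCell μ L fun z hz => (hF hz).1.2]
  refine measure_mono (iUnion₂_subset fun z hz => ?_)
  obtain ⟨⟨hzD, hzL⟩, hzB⟩ := hF hz
  exact voronoiCell_subset_of_notMem_cellsMeetingFrontier hzL hzB ⟨z, mem_voronoiCell_self z, hzD⟩

theorem abs_ncard_inter_sub_measure_div_le [DiscreteTopology L] [IsZLattice ℝ L] {D : Set E}
    (hD : IsBounded D) :
    |((D ∩ L).ncard : ℝ) - (μ D).toReal / (μ (voronoiCell L 0)).toReal| ≤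
      (cellsMeetingFrontier L D).ncard := by
  classical
  obtain ⟨R, hR⟩ := exists_forall_dist_le L
  have hSfin : (D ∩ L).Finite := inter_comm (L : Set E) D ▸ finite_inter L hD
  have hBfin : (cellsMeetingFrontier L D).Finite :=
    (finite_inter L (isBounded_cellsMeetingFrontier hR hD)).subset
      (subset_inter (cellsMeetingFrontier_subset _ D) subset_rfl)
  rw [ncard_eq_toFinset_card _ hSfin, ncard_eq_toFinset_card _ hBfin]
  set S := hSfin.toFinset
  set B := hBfin.toFinset
  have hlower := card_mul_measure_voronoiCell_le μ L (D := D) (F := S \ B) (by simp [S, B])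
  have hupper := measure_le_card_mul_measure_voronoiCell μ L (D := D) (F := S ∪ B)
    (by simpa [S, B] using cellsMeetingFrontier_subset (L : Set E) D) (by simp [S, B])
  have hv : 0 < (μ (voronoiCell L 0)).toReal :=
    ENNReal.toReal_pos (measure_voronoiCell_pos μ L).ne' (measure_voronoiCell_lt_top μ L).ne
  have h1 : ((S \ B).card : ℝ) * (μ (voronoiCell L 0)).toReal ≤ (μ D).toReal := by
    simpa using ENNReal.toReal_mono hD.measure_lt_top.ne hlower
  have h2 : (μ D).toReal ≤ ((S ∪ B).card : ℝ) * (μ (voronoiCell L 0)).toReal := by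
    simpa using ENNReal.toReal_mono
      (ENNReal.mul_ne_top (ENNReal.natCast_ne_top _) (measure_voronoiCell_lt_top μ L).ne) hupper
  have h3 : (S.card : ℝ) ≤ (S \ B).card + B.card := by
    exact_mod_cast Finset.card_le_card_sdiff_add_card
  have h4 : ((S ∪ B).card : ℝ) ≤ S.card + B.card := by exact_mod_cast Finset.card_union_le S B
  have h5 : (S.card : ℝ) - B.card ≤ (μ D).toReal / (μ (voronoiCell L 0)).toReal :=
    (le_div_iff₀ hv).2 (by nlinarith)
  have h6 : (μ D).toReal / (μ (voronoiCell L 0)).toReal ≤ S.card + B.card :=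
    (div_le_iff₀ hv).2 (by nlinarith)
  rw [abs_sub_le_iff]
  constructor <;> linarith

end ZLattice

end Measure

end Voronoi

namespace Complex

theorem im_ne_zero_of_sq_sub_mul_add_eq_zero {p q : ℝ} {τ : ℂ} (hτ : τ ^ 2 - p * τ + q = 0)
    (hdisc : p ^ 2 < 4 * q) : τ.im ≠ 0 := by
  intro him
  have hre : τ.re ^ 2 - p * τ.re + q = 0 := by
    simpa [sq, him] using congrArg re hτ
  nlinarith [sq_nonneg (2 * τ.re - p)]

theorem linearIndependent_one_of_im_ne_zero {τ : ℂ} (hτ : τ.im ≠ 0) :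
    LinearIndependent ℝ ![1, τ] := by
  refine LinearIndependent.pair_iff.2 fun s t hst => ?_
  have ht : t = 0 := by
    simpa [hτ] using congrArg im hst
  subst ht
  simpa using hst

theorem addHaar_image_mul_left (μ : Measure ℂ) [μ.IsAddHaarMeasure] (N : ℂ) (s : Set ℂ) :
    μ ((N * ·) '' s) = ENNReal.ofReal (‖N‖ ^ 2) * μ s := by
  have hdet : LinearMap.det (Algebra.lmul ℝ ℂ N) = ‖N‖ ^ 2 := by
    rw [← Algebra.norm_apply, Algebra.norm_complex_apply, normSq_eq_norm_sq]
  rw [show (N * ·) = ⇑(Algebra.lmul ℝ ℂ N) from rfl, Measure.addHaar_image_linearMap, hdet,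
    abs_of_nonneg (by positivity)]

end Complex

theorem ZLattice.exists_ncard_cellsMeetingFrontier_image_mul_left_le (L : Submodule ℤ ℂ)
    [DiscreteTopology L] [IsZLattice ℝ L] {U : Set ℂ} {ι : Type*} [Fintype ι] {γ : ι → ℝ → ℂ}
    {s : ι → Set ℝ} (hγ : ∀ i, BoundedVariationOn (γ i) (s i)) (hU : frontier U ⊆ ⋃ i, γ i '' s i) :
    ∃ A : ℝ, ∀ N : ℂ, 1 ≤ ‖N‖ →
      ((cellsMeetingFrontier L ((N * ·) '' U)).ncard : ℝ) ≤ A * ‖N‖ := by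
  classical
  obtain ⟨R, hR⟩ := exists_forall_dist_le L
  set K := ((L : Set ℂ) ∩ closedBall 0 (2 * (1 + R))).ncard
  set ℓ := ∑ i, (eVariationOn (γ i) (s i)).toReal
  refine ⟨(ℓ + Fintype.card ι) * K, fun N hN => ?_⟩
  have hN0 : 0 < ‖N‖ := one_pos.trans_le hN
  -- cover `∂U` by balls of radius `1 / ‖N‖`, so that `∂(N U)` is covered by balls of radius `1`
  obtain ⟨C, hCcard, hC⟩ :=
    exists_finset_subset_iUnion_closedBall_of_subset_iUnion_image hγ hU (inv_pos.2 hN0)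
  have hfr : frontier ((N * ·) '' U) ⊆ ⋃ x ∈ C.image (N * ·), closedBall x 1 := by
    rw [← Homeomorph.coe_mulLeft₀ N (norm_pos_iff.1 hN0), ← Homeomorph.image_frontier]
    rintro _ ⟨y, hy, rfl⟩
    obtain ⟨x, hx, hyx⟩ := mem_iUnion₂.1 (hC hy)
    refine mem_biUnion (Finset.mem_coe.2 (Finset.mem_image_of_mem _ hx)) ?_
    rw [mem_closedBall, dist_eq_norm] at hyx ⊢
    calc ‖N * y - N * x‖ = ‖N‖ * ‖y - x‖ := by rw [← mul_sub, norm_mul]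
      _ ≤ ‖N‖ * ‖N‖⁻¹ := by gcongr
      _ = 1 := mul_inv_cancel₀ hN0.ne'
  have hK : 0 ≤ (K : ℝ) := Nat.cast_nonneg K
  have hℓ : 0 ≤ ℓ := Finset.sum_nonneg fun i _ => ENNReal.toReal_nonneg
  calc ((cellsMeetingFrontier L ((N * ·) '' U)).ncard : ℝ) ≤ (C.image (N * ·)).card * K := by
        exact_mod_cast ncard_cellsMeetingFrontier_le L hR _ hfr
    _ ≤ C.card * K := mul_le_mul_of_nonneg_right (by exact_mod_cast Finset.card_image_le) hK
    _ ≤ (ℓ * ‖N‖ + Fintype.card ι) * K := by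
        gcongr
        simpa [div_inv_eq_mul] using hCcard
    _ ≤ (ℓ + Fintype.card ι) * K * ‖N‖ := by
        have : (Fintype.card ι : ℝ) ≤ Fintype.card ι * ‖N‖ :=
          le_mul_of_one_le_right (by positivity) hN
        nlinarith

theorem voronoi_boundary_covering_and_lattice_count_general (p q : ℤ) (τ : ℂ)
    (hτq : τ ^ 2 - (p : ℂ) * τ + (q : ℂ) = 0) (hdisc : p ^ 2 < 4 * q)
    (U : Set ℂ) (hUb : Bornology.IsBounded U)
    (n : ℕ) (γ : Fin n → ℝ → ℂ)
    (hγrect : ∀ i, eVariationOn (γ i) (Set.Icc 0 1) < ⊤)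
    (hγcover : frontier U = ⋃ i, γ i '' Set.Icc (0 : ℝ) 1) :
    (∃ A : ℝ, ∀ N : ℂ, 1 ≤ ‖N‖ →
      (Set.ncard {z : ℂ | (∃ a b : ℤ, z = (a : ℂ) + (b : ℂ) * τ) ∧
          ∃ v : ℂ, (∀ a b : ℤ, ‖v‖ ≤ ‖v - ((a : ℂ) + (b : ℂ) * τ)‖) ∧
            z + v ∈ frontier ((fun u => N * u) '' U)} : ℝ) ≤ A * ‖N‖) ∧
    (∃ B : ℝ, ∀ N : ℂ, 1 ≤ ‖N‖ →
      |(Set.ncard ((fun u => N * u) '' U ∩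
          {z : ℂ | ∃ a b : ℤ, z = (a : ℂ) + (b : ℂ) * τ}) : ℝ) -
        ‖N‖ ^ 2 * (MeasureTheory.volume U).toReal /
          (MeasureTheory.volume
            {v : ℂ | ∀ a b : ℤ, ‖v‖ ≤ ‖v - ((a : ℂ) + (b : ℂ) * τ)‖}).toReal| ≤
      B * ‖N‖) := by
  have him : τ.im ≠ 0 := Complex.im_ne_zero_of_sq_sub_mul_add_eq_zero (p := p) (q := q)
    (by exact_mod_cast hτq) (by exact_mod_cast hdisc)
  set L := (⟨1, τ, Complex.linearIndependent_one_of_im_ne_zero him⟩ : PeriodPair).lattice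
  have hmemL : ∀ z : ℂ, (∃ a b : ℤ, z = a + b * τ) ↔ z ∈ L := fun z => by
    simp [L, PeriodPair.mem_lattice, eq_comm]
  have hmemV : ∀ v : ℂ, (∀ a b : ℤ, ‖v‖ ≤ ‖v - (a + b * τ)‖) ↔ v ∈ voronoiCell L 0 := fun v =>
    ⟨fun h w hw => by
      obtain ⟨a, b, rfl⟩ := (hmemL w).2 hw
      simpa [dist_eq_norm] using h a b,
    fun h a b => by simpa [dist_eq_norm] using h _ ((hmemL _).1 ⟨a, b, rfl⟩)⟩
  obtain ⟨A, hA⟩ := ZLattice.exists_ncard_cellsMeetingFrontier_image_mul_left_le L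
    (fun i => (hγrect i).ne) hγcover.subset
  refine ⟨⟨A, fun N hN => ?_⟩, ⟨A, fun N hN => ?_⟩⟩
  · simpa only [hmemL, hmemV, ← cellsMeetingFrontier_eq_setOf_add] using hA N hN
  · have hD : IsBounded ((N * ·) '' U) := hUb.smul₀ N
    rw [Set.ext hmemL, Set.ext hmemV, ← ENNReal.toReal_ofReal (sq_nonneg ‖N‖), ← ENNReal.toReal_mul,
      ← Complex.addHaar_image_mul_left]
    exact (ZLattice.abs_ncard_inter_sub_measure_div_le volume L hD).trans (hA N hN)

/-- **Covering the boundary by Voronoi cells, and lattice point counting.**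
Let `Λ = ℤ + ℤτ` (for an imaginary quadratic algebraic integer `τ`) be a lattice in `ℂ`
with Voronoi cell `V` of `0`, and let `U ⊆ ℂ` be a bounded measurable set whose boundary
consists of finitely many rectifiable curves. Then the number of Voronoi cells of `Λ`
needed to cover the boundary of `N·U` is `O(|N|)` as `N → ∞` in `ℂ`; in particular, the
number of lattice points of `Λ` in `N·U` equals `|N|² λ(U)/λ(V) + O(|N|)`. -/
theorem voronoi_boundary_covering_and_lattice_count (p q : ℤ) (τ : ℂ)
    (hτq : τ ^ 2 - (p : ℂ) * τ + (q : ℂ) = 0) (hdisc : p ^ 2 < 4 * q)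
    (U : Set ℂ) (hUb : Bornology.IsBounded U) (hUm : MeasurableSet U)
    (n : ℕ) (γ : Fin n → ℝ → ℂ)
    (hγc : ∀ i, ContinuousOn (γ i) (Set.Icc 0 1))
    (hγrect : ∀ i, eVariationOn (γ i) (Set.Icc 0 1) < ⊤)
    (hγcover : frontier U = ⋃ i, γ i '' Set.Icc (0 : ℝ) 1) :
    (∃ A : ℝ, ∀ N : ℂ, 1 ≤ ‖N‖ →
      (Set.ncard {z : ℂ | (∃ a b : ℤ, z = (a : ℂ) + (b : ℂ) * τ) ∧
          ∃ v : ℂ, (∀ a b : ℤ, ‖v‖ ≤ ‖v - ((a : ℂ) + (b : ℂ) * τ)‖) ∧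
            z + v ∈ frontier ((fun u => N * u) '' U)} : ℝ) ≤ A * ‖N‖) ∧
    (∃ B : ℝ, ∀ N : ℂ, 1 ≤ ‖N‖ →
      |(Set.ncard ((fun u => N * u) '' U ∩
          {z : ℂ | ∃ a b : ℤ, z = (a : ℂ) + (b : ℂ) * τ}) : ℝ) -
        ‖N‖ ^ 2 * (MeasureTheory.volume U).toReal /
          (MeasureTheory.volume
            {v : ℂ | ∀ a b : ℤ, ‖v‖ ≤ ‖v - ((a : ℂ) + (b : ℂ) * τ)‖}).toReal| ≤
      B * ‖N‖) :=
  voronoi_boundary_covering_and_lattice_count_general p q τ hτq hdisc U hUb n γ hγrect hγcover
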